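/- Beth definability from Craig interpolation in ITLNL: let A be an ITLNL formula containing variable p, let p' be a fresh variable, and suppose ⊨ □_a A ∧ □_a [p'/p]A → □_a(p ≡ p') (A implicitly defines p). Assuming ITLNL has uniform Craig interpolation, there exists a formula C with Var(C) ⊆ Var(A)\{p} such that ⊨ □_a A → □_a(p ≡ C). -/

import Mathlib

/-- Formulas of ITLNL: ITL extended with the neighbourhood modalities `◇_l`, `◇_r`. -/
inductive ITLNL (V : Type) : Type
  | bot : ITLNL V
  | var : V → ITLNL V
  | imp : ITLNL V → ITLNL V → ITLNL V
  | next : ITLNL V → ITLNL V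
  | chop : ITLNL V → ITLNL V → ITLNL V
  | star : ITLNL V → ITLNL V
  | diaL : ITLNL V → ITLNL V
  | diaR : ITLNL V → ITLNL V

namespace ITLNL

variable {V : Type}

/-- Satisfaction `σ,i,j ⊨ A` for `σ : ℤ → Set V` and reference intervals `[i,j]`, `i ≤ j`. -/
def Sat (σ : ℤ → Set V) : ℤ → ℤ → ITLNL V → Prop
  | _, _, bot => False
  | i, _, var p => p ∈ σ i
  | i, j, imp A B => Sat σ i j A → Sat σ i j B
  | i, j, next A => i < j ∧ Sat σ (i + 1) j A
  | i, j, chop A B => ∃ k, i ≤ k ∧ k ≤ j ∧ Sat σ i k A ∧ Sat σ k j B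
  | i, j, star A => i = j ∨ ∃ (N : ℕ) (f : ℕ → ℤ), f 0 = i ∧ f N = j ∧
      (∀ n < N, f n < f (n + 1)) ∧ ∀ n < N, Sat σ (f n) (f (n + 1)) A
  | i, _, diaL A => ∃ k, k ≤ i ∧ Sat σ k i A
  | _, j, diaR A => ∃ k, j ≤ k ∧ Sat σ j k A

def top : ITLNL V := imp bot bot
def neg (A : ITLNL V) : ITLNL V := imp A bot
def or' (A B : ITLNL V) : ITLNL V := imp (neg A) B
def and' (A B : ITLNL V) : ITLNL V := neg (imp A (neg B))
def iff' (A B : ITLNL V) : ITLNL V := and' (imp A B) (imp B A)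
def empty : ITLNL V := neg (next top)
def skip : ITLNL V := next empty
def boxL (A : ITLNL V) : ITLNL V := neg (diaL (neg A))
def boxR (A : ITLNL V) : ITLNL V := neg (diaR (neg A))
/-- The universal-access diamond `◇_a := ◇_r◇_r◇_l◇_l`. -/
def diaA (A : ITLNL V) : ITLNL V := diaR (diaR (diaL (diaL A)))
/-- The universal modality `□_a := ¬◇_a¬`. -/
def boxA (A : ITLNL V) : ITLNL V := neg (diaA (neg A))

def bigOr : List (ITLNL V) → ITLNL V
  | [] => bot
  | A :: l => or' A (bigOr l)

def bigAnd : List (ITLNL V) → ITLNL V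
  | [] => top
  | A :: l => and' A (bigAnd l)

def Valid (A : ITLNL V) : Prop := ∀ (σ : ℤ → Set V) (i j : ℤ), i ≤ j → Sat σ i j A

/-- The set of propositional variables occurring in a formula. -/
def vars : ITLNL V → Set V
  | bot => ∅
  | var p => {p}
  | imp A B => vars A ∪ vars B
  | next A => vars A
  | chop A B => vars A ∪ vars B
  | star A => vars A
  | diaL A => vars A
  | diaR A => vars A

/-- Semantics of existential propositional quantification `∃p A`. -/
def SatEx (p : V) (A : ITLNL V) (σ : ℤ → Set V) (i j : ℤ) : Prop :=
  ∃ σ' : ℤ → Set V, (∀ k : ℤ, σ k \ {p} = σ' k \ {p}) ∧ Sat σ' i j A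

end ITLNL

namespace ITLNL

variable {V : Type} [DecidableEq V]

/-- `[p'/p]A`: substitution of variable `p'` for variable `p` in `A`. -/
def substVar (p p' : V) : ITLNL V → ITLNL V
  | bot => bot
  | var q => if q = p then var p' else var q
  | imp A B => imp (substVar p p' A) (substVar p p' B)
  | next A => next (substVar p p' A)
  | chop A B => chop (substVar p p' A) (substVar p p' B)
  | star A => star (substVar p p' A)
  | diaL A => diaL (substVar p p' A)
  | diaR A => diaR (substVar p p' A)

end ITLNL

open ITLNL

/-!
Interpolate the valid implication `(□_a A ∧ p) → (□_a [p'/p]A → p')`. The interpolant `C` mentions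
neither `p` nor `p'`, and `p → C` holds wherever `A` holds everywhere. Conversely, in a model of
`□_a A` where `C` holds, let `p'` copy `p`: then `□_a [p'/p]A` and `C` still hold, so `p'`, and
hence `p`, holds.
-/

namespace ITLNL

section Semantics

variable {V : Type}

theorem sat_congr_of_agree {σ σ' : ℤ → Set V} {B : ITLNL V}
    (h : ∀ k, ∀ q ∈ vars B, q ∈ σ k ↔ q ∈ σ' k) (i j : ℤ) : Sat σ i j B ↔ Sat σ' i j B := by
  induction B generalizing i j with
  | bot => rfl
  | var q => exact h i q rfl
  | imp B C ihB ihC | chop B C ihB ihC =>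
    simp only [Sat, ihB fun k q hq => h k q (Or.inl hq), ihC fun k q hq => h k q (Or.inr hq)]
  | next B ih | star B ih | diaL B ih | diaR B ih => simp only [Sat, ih h]

@[simp] theorem sat_and' {σ : ℤ → Set V} {i j : ℤ} {B C : ITLNL V} :
    Sat σ i j (and' B C) ↔ Sat σ i j B ∧ Sat σ i j C := by
  simp only [and', neg, Sat]
  tauto

@[simp] theorem sat_iff' {σ : ℤ → Set V} {i j : ℤ} {B C : ITLNL V} :
    Sat σ i j (iff' B C) ↔ (Sat σ i j B ↔ Sat σ i j C) := by
  simp only [iff', sat_and', Sat]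
  tauto

theorem sat_boxA {σ : ℤ → Set V} {i j : ℤ} {B : ITLNL V} :
    Sat σ i j (boxA B) ↔ ∀ m n, m ≤ n → Sat σ m n B := by
  constructor
  · intro h m n hmn
    by_contra hB
    exact h ⟨max j n, le_max_left _ _, max j n, le_rfl, n, le_max_right _ _, m, hmn, hB⟩
  · rintro h ⟨-, -, -, -, k, -, m, hmk, hB⟩
    exact hB (h m k hmk)

@[simp] theorem vars_boxA (B : ITLNL V) : vars (boxA B) = vars B := by
  simp [boxA, diaA, neg, vars]

theorem valid_interpolation_premise {A B : ITLNL V} {p p' : V}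
    (himplicit : Valid (imp (and' (boxA A) (boxA B)) (boxA (iff' (var p) (var p'))))) :
    Valid (imp (and' (boxA A) (var p)) (imp (boxA B) (var p'))) := by
  intro σ i j hij hAp hB
  rw [sat_and'] at hAp
  have hpp' := sat_boxA.1 (himplicit σ i j hij (sat_and'.2 ⟨hAp.1, hB⟩)) i j hij
  exact (sat_iff'.1 hpp').1 hAp.2

end Semantics

section Substitution

variable {V : Type} [DecidableEq V]

theorem sat_substVar {σ : ℤ → Set V} {p p' : V} (h : ∀ k, p ∈ σ k ↔ p' ∈ σ k)
    (B : ITLNL V) (i j : ℤ) : Sat σ i j (substVar p p' B) ↔ Sat σ i j B := by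
  induction B generalizing i j with
  | bot => rfl
  | var q =>
    by_cases hq : q = p
    · subst hq
      simpa [substVar, Sat] using (h i).symm
    · simp only [substVar, if_neg hq]
  | imp B C ihB ihC | chop B C ihB ihC => simp only [substVar, Sat, ihB, ihC]
  | next B ih | star B ih | diaL B ih | diaR B ih => simp only [substVar, Sat, ih]

theorem vars_substVar_subset (p p' : V) (B : ITLNL V) :
    vars (substVar p p' B) ⊆ vars B \ {p} ∪ {p'} := by
  induction B with
  | bot => simp [substVar, vars]
  | var q =>
    by_cases hq : q = p <;> simp [substVar, vars, hq]
  | imp B C ihB ihC | chop B C ihB ihC =>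
    refine Set.union_subset (ihB.trans ?_) (ihC.trans ?_) <;> simp only [vars] <;> gcongr
    exacts [Set.subset_union_left, Set.subset_union_right]
  | next B ih | star B ih | diaL B ih | diaR B ih => exact ih

def copyVar (σ : ℤ → Set V) (p p' : V) (k : ℤ) : Set V :=
  {q | if q = p' then p ∈ σ k else q ∈ σ k}

theorem mem_copyVar_self {σ : ℤ → Set V} {p p' : V} {k : ℤ} :
    p' ∈ copyVar σ p p' k ↔ p ∈ σ k := by
  simp [copyVar]

theorem mem_copyVar_of_ne {σ : ℤ → Set V} {p p' q : V} {k : ℤ} (hq : q ≠ p') :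
    q ∈ copyVar σ p p' k ↔ q ∈ σ k := by
  simp [copyVar, hq]

theorem sat_copyVar {σ : ℤ → Set V} {p p' : V} {B : ITLNL V} (hB : p' ∉ vars B) (i j : ℤ) :
    Sat (copyVar σ p p') i j B ↔ Sat σ i j B :=
  sat_congr_of_agree (fun _ _ hq => mem_copyVar_of_ne (ne_of_mem_of_not_mem hq hB)) i j

theorem sat_substVar_copyVar {σ : ℤ → Set V} {p p' : V} {B : ITLNL V} (hB : p' ∉ vars B)
    (hne : p' ≠ p) (i j : ℤ) : Sat (copyVar σ p p') i j (substVar p p' B) ↔ Sat σ i j B := by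
  rw [sat_substVar (fun _ => (mem_copyVar_of_ne hne.symm).trans mem_copyVar_self.symm),
    sat_copyVar hB]

end Substitution

section Definability

variable {V : Type} [DecidableEq V]

theorem vars_subset_of_interpolant {A C : ITLNL V} {p p' : V} (hfresh : p' ∉ vars A)
    (hne : p' ≠ p)
    (hC : vars C ⊆ vars (and' (boxA A) (var p)) ∩ vars (imp (boxA (substVar p p' A)) (var p'))) :
    vars C ⊆ vars A \ {p} := by
  intro q hq
  obtain ⟨hqX, hqY⟩ := hC hq
  simp only [and', neg, vars, vars_boxA, Set.union_empty, Set.mem_union,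
    Set.mem_singleton_iff] at hqX hqY
  have hqp' : q ≠ p' := by
    rintro rfl
    exact hfresh (hqX.resolve_right hne)
  exact (vars_substVar_subset p p' A (hqY.resolve_right hqp')).resolve_right hqp'

theorem valid_boxA_iff_of_interpolant {A C : ITLNL V} {p p' : V} (hfresh : p' ∉ vars A)
    (hne : p' ≠ p) (hC : p' ∉ vars C) (hAC : Valid (imp (and' (boxA A) (var p)) C))
    (hCA : Valid (imp C (imp (boxA (substVar p p' A)) (var p')))) :
    Valid (imp (boxA A) (boxA (iff' (var p) C))) := by
  intro σ i j _ hA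
  rw [sat_boxA] at hA ⊢
  intro m n hmn
  refine sat_iff'.2 ⟨fun hp => hAC σ m n hmn (sat_and'.2 ⟨sat_boxA.2 hA, hp⟩), fun hCmn => ?_⟩
  have hA' : Sat (copyVar σ p p') m n (boxA (substVar p p' A)) :=
    sat_boxA.2 fun a b hab => (sat_substVar_copyVar hfresh hne a b).2 (hA a b hab)
  exact mem_copyVar_self.1 (hCA _ m n hmn ((sat_copyVar hC m n).2 hCmn) hA')

end Definability

end ITLNL

theorem beth_definability_general {V : Type} [DecidableEq V] (A : ITLNL V) (p p' : V)
    (hfresh : p' ∉ vars A) (hne : p' ≠ p)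
    (hCraig : ∀ X Y : ITLNL V, Valid (imp X Y) →
      ∃ C : ITLNL V, vars C ⊆ vars X ∩ vars Y ∧ Valid (imp X C) ∧ Valid (imp C Y))
    (himplicit : Valid (imp (and' (boxA A) (boxA (substVar p p' A)))
      (boxA (iff' (var p) (var p'))))) :
    ∃ C : ITLNL V, vars C ⊆ vars A \ {p} ∧
      Valid (imp (boxA A) (boxA (iff' (var p) C))) := by
  obtain ⟨C, hCvars, hAC, hCA⟩ := hCraig _ _ (valid_interpolation_premise himplicit)
  have hC : vars C ⊆ vars A \ {p} := vars_subset_of_interpolant hfresh hne hCvars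
  exact ⟨C, hC, valid_boxA_iff_of_interpolant hfresh hne (fun h => hfresh (hC h).1) hAC hCA⟩

/-- Beth definability from Craig interpolation in ITLNL: if `A`
(containing `p`) implicitly defines `p`, i.e.
`⊨ □_a A ∧ □_a [p'/p]A → □_a(p ≡ p')` for fresh `p'`, then (assuming Craig
interpolation for ITLNL) there is a `C` with `Var C ⊆ Var A \ {p}` such that
`⊨ □_a A → □_a(p ≡ C)`. -/
theorem beth_definability {V : Type} [DecidableEq V] (A : ITLNL V) (p p' : V)
    (hp : p ∈ vars A) (hfresh : p' ∉ vars A) (hne : p' ≠ p)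
    (hCraig : ∀ X Y : ITLNL V, Valid (imp X Y) →
      ∃ C : ITLNL V, vars C ⊆ vars X ∩ vars Y ∧ Valid (imp X C) ∧ Valid (imp C Y))
    (himplicit : Valid (imp (and' (boxA A) (boxA (substVar p p' A)))
      (boxA (iff' (var p) (var p'))))) :
    ∃ C : ITLNL V, vars C ⊆ vars A \ {p} ∧
      Valid (imp (boxA A) (boxA (iff' (var p) C))) :=
  beth_definability_general A p p' hfresh hne hCraig himplicit
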